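/- (Proposition 5, item 1.) Let Σ be a p×p real matrix (indexed by pairs), and let A = A2 ⊛ A1, H = H2 ⊛ H1, and H̃ = H̃2 ⊛ H̃1 be separable matrices with all factors A1, H1, H̃1 (p1×p1) and A2, H2, H̃2 (p2×p2) invertible. If H̃ H̃ᵀ = A H Hᵀ Aᵀ, then there exist an orthogonal p1×p1 matrix R1 and an orthogonal p2×p2 matrix R2 such that, with R = R2 ⊛ R1, H̃⁻¹ (A Σ Aᵀ) H̃⁻ᵀ = R (H⁻¹ Σ H⁻ᵀ) Rᵀ. -/

import Mathlib

open Matrix BigOperators Filter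

/-- The separable (Kronecker) product `M2 ⊛ M1`: entry at `((i,j),(i',j'))` is
`M1 i i' * M2 j j'`. -/
noncomputable def sep {p1 p2 : ℕ} (M1 : Matrix (Fin p1) (Fin p1) ℝ)
    (M2 : Matrix (Fin p2) (Fin p2) ℝ) :
    Matrix (Fin p1 × Fin p2) (Fin p1 × Fin p2) ℝ :=
  fun x y => M1 x.1 y.1 * M2 x.2 y.2

/-- A `p × p` matrix is separable positive definite if it is the separable product of
two symmetric positive definite matrices. -/
def SepPD {p1 p2 : ℕ} (K : Matrix (Fin p1 × Fin p2) (Fin p1 × Fin p2) ℝ) : Prop :=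
  ∃ (S1 : Matrix (Fin p1) (Fin p1) ℝ) (S2 : Matrix (Fin p2) (Fin p2) ℝ),
    S1.PosDef ∧ S2.PosDef ∧ K = sep S1 S2

/-- The divergence `d(K : S) = log det K + trace (K⁻¹ S)`. -/
noncomputable def dvg {ι : Type*} [Fintype ι] [DecidableEq ι] (K S : Matrix ι ι ℝ) : ℝ :=
  Real.log K.det + (K⁻¹ * S).trace

/-- `P1 S B` has entries `∑_{j,j'} B j j' * S (i,j) (i',j')`. -/
noncomputable def P1 {p1 p2 : ℕ} (S : Matrix (Fin p1 × Fin p2) (Fin p1 × Fin p2) ℝ)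
    (B : Matrix (Fin p2) (Fin p2) ℝ) : Matrix (Fin p1) (Fin p1) ℝ :=
  fun i i' => ∑ j, ∑ j', B j j' * S (i, j) (i', j')

/-- `P2 S A` has entries `∑_{i,i'} A i i' * S (i,j) (i',j')`. -/
noncomputable def P2 {p1 p2 : ℕ} (S : Matrix (Fin p1 × Fin p2) (Fin p1 × Fin p2) ℝ)
    (A : Matrix (Fin p1) (Fin p1) ℝ) : Matrix (Fin p2) (Fin p2) ℝ :=
  fun j j' => ∑ i, ∑ i', A i i' * S (i, j) (i', j')

/-!
Put `G := H̃⁻¹ A H`. Then `H̃⁻¹ A Σ Aᵀ H̃⁻ᵀ = G (H⁻¹ Σ H⁻ᵀ) Gᵀ`, and the hypothesis says exactly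
that `G` is orthogonal, so it suffices to split the orthogonal matrix `G = G₂ ⊛ G₁` into
orthogonal factors. Now `G Gᵀ = (G₂ G₂ᵀ) ⊛ (G₁ G₁ᵀ) = 1` forces `c · G₁ G₁ᵀ = 1` and
`d · G₂ G₂ᵀ = 1` for diagonal entries `c, d ≥ 0` with `c d = 1`, so `R₁ = √c G₁` and
`R₂ = √d G₂` are orthogonal with `R₂ ⊛ R₁ = G`.
-/

open scoped Kronecker

theorem sep_eq_kronecker {p1 p2 : ℕ} (M1 : Matrix (Fin p1) (Fin p1) ℝ)
    (M2 : Matrix (Fin p2) (Fin p2) ℝ) : sep M1 M2 = M1 ⊗ₖ M2 :=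
  rfl

section Congruence

variable {ι R : Type*} [Fintype ι] [DecidableEq ι] [CommRing R]

theorem inv_mul_conj_eq_conj_inv_conj (T X H S : Matrix ι ι R) (hH : IsUnit H.det) :
    T⁻¹ * (X * S * Xᵀ) * (T⁻¹)ᵀ =
      (T⁻¹ * X * H) * (H⁻¹ * S * (H⁻¹)ᵀ) * (T⁻¹ * X * H)ᵀ := by
  have hHS : H * (H⁻¹ * S * (H⁻¹)ᵀ) * Hᵀ = S := by
    rw [transpose_nonsing_inv, ← Matrix.mul_assoc, ← Matrix.mul_assoc, mul_nonsing_inv _ hH,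
      Matrix.one_mul, Matrix.mul_assoc, nonsing_inv_mul _ ((det_transpose H).symm ▸ hH),
      Matrix.mul_one]
  conv_lhs => rw [← hHS]
  simp only [transpose_mul, Matrix.mul_assoc]

theorem inv_mul_mul_mul_transpose_eq_one {T X H : Matrix ι ι R} (hT : IsUnit T.det)
    (h : T * Tᵀ = X * (H * Hᵀ) * Xᵀ) : (T⁻¹ * X * H) * (T⁻¹ * X * H)ᵀ = 1 := by
  calc (T⁻¹ * X * H) * (T⁻¹ * X * H)ᵀ = T⁻¹ * (X * (H * Hᵀ) * Xᵀ) * (T⁻¹)ᵀ := by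
        simp only [transpose_mul, Matrix.mul_assoc]
    _ = (T⁻¹ * T) * (Tᵀ * (Tᵀ)⁻¹) := by
        rw [← h, transpose_nonsing_inv]; simp only [Matrix.mul_assoc]
    _ = 1 := by
        rw [nonsing_inv_mul _ hT, mul_nonsing_inv _ ((det_transpose T).symm ▸ hT),
          Matrix.one_mul]

end Congruence

section Kronecker

variable {m n R : Type*}

theorem isUnit_det_kronecker [Fintype m] [Fintype n] [DecidableEq m] [DecidableEq n] [CommRing R]
    {M : Matrix m m R} {N : Matrix n n R}
    (hM : IsUnit M.det) (hN : IsUnit N.det) : IsUnit (M ⊗ₖ N).det := by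
  rw [det_kronecker]
  exact (hM.pow _).mul (hN.pow _)

theorem kronecker_transpose [Mul R] (M : Matrix m m R) (N : Matrix n n R) :
    (M ⊗ₖ N)ᵀ = Mᵀ ⊗ₖ Nᵀ :=
  (kroneckerMap_transpose _ M N).symm

theorem smul_eq_one_of_kronecker_eq_one_left [DecidableEq m] [DecidableEq n] [CommSemiring R]
    {M : Matrix m m R} {N : Matrix n n R} (h : M ⊗ₖ N = 1) (j : n) : N j j • M = 1 := by
  ext i i'
  have hij := congr_fun₂ h (i, j) (i', j)
  simp only [kronecker_apply, one_apply, Prod.mk.injEq, and_true] at hij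
  rw [Matrix.smul_apply, smul_eq_mul, mul_comm, hij, one_apply]

theorem smul_eq_one_of_kronecker_eq_one_right [DecidableEq m] [DecidableEq n] [CommSemiring R]
    {M : Matrix m m R} {N : Matrix n n R} (h : M ⊗ₖ N = 1) (i : m) : M i i • N = 1 := by
  ext j j'
  have hij := congr_fun₂ h (i, j) (i, j')
  simp only [kronecker_apply, one_apply, Prod.mk.injEq, true_and] at hij
  rw [Matrix.smul_apply, smul_eq_mul, hij, one_apply]

theorem mul_transpose_self_apply_nonneg [Fintype m] (A : Matrix m m ℝ) (i : m) :
    0 ≤ (A * Aᵀ) i i := by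
  rw [mul_apply]
  exact Finset.sum_nonneg fun k _ => mul_self_nonneg (A i k)

theorem sqrt_smul_mul_transpose [Fintype m] {A : Matrix m m ℝ} {c : ℝ} (hc : 0 ≤ c) :
    (√c • A) * (√c • A)ᵀ = c • (A * Aᵀ) := by
  rw [transpose_smul, Matrix.smul_mul, Matrix.mul_smul, smul_smul, Real.mul_self_sqrt hc]

theorem exists_orthogonal_kronecker_eq [Fintype m] [Fintype n] [DecidableEq m] [DecidableEq n]
    {A : Matrix m m ℝ} {B : Matrix n n ℝ} (h : (A ⊗ₖ B) * (A ⊗ₖ B)ᵀ = 1) :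
    ∃ (R1 : Matrix m m ℝ) (R2 : Matrix n n ℝ),
      R1 * R1ᵀ = 1 ∧ R2 * R2ᵀ = 1 ∧ R1 ⊗ₖ R2 = A ⊗ₖ B := by
  cases isEmpty_or_nonempty (m × n) with
  | inl _ => exact ⟨1, 1, by simp, by simp, Subsingleton.elim _ _⟩
  | inr hmn =>
  obtain ⟨i, j⟩ := hmn.some
  rw [kronecker_transpose, ← mul_kronecker_mul] at h
  set c := (B * Bᵀ) j j
  set d := (A * Aᵀ) i i
  have hc : 0 ≤ c := mul_transpose_self_apply_nonneg B j
  have hd : 0 ≤ d := mul_transpose_self_apply_nonneg A i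
  have hcA : c • (A * Aᵀ) = 1 := smul_eq_one_of_kronecker_eq_one_left h j
  have hcd : c * d = 1 := by simpa using congr_fun₂ hcA i i
  refine ⟨√c • A, √d • B, ?_, ?_, ?_⟩
  · rw [sqrt_smul_mul_transpose hc, hcA]
  · rw [sqrt_smul_mul_transpose hd, smul_eq_one_of_kronecker_eq_one_right h i]
  · rw [smul_kronecker, kronecker_smul, smul_smul, ← Real.sqrt_mul hc, hcd, Real.sqrt_one,
      one_smul]

end Kronecker

theorem stmt13_general (p1 p2 : ℕ)
    (S : Matrix (Fin p1 × Fin p2) (Fin p1 × Fin p2) ℝ)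
    (A1 : Matrix (Fin p1) (Fin p1) ℝ) (A2 : Matrix (Fin p2) (Fin p2) ℝ)
    (H1 : Matrix (Fin p1) (Fin p1) ℝ) (H2 : Matrix (Fin p2) (Fin p2) ℝ)
    (Ht1 : Matrix (Fin p1) (Fin p1) ℝ) (Ht2 : Matrix (Fin p2) (Fin p2) ℝ)
    (hH1 : IsUnit H1.det) (hH2 : IsUnit H2.det)
    (hHt1 : IsUnit Ht1.det) (hHt2 : IsUnit Ht2.det)
    (hcross : sep Ht1 Ht2 * (sep Ht1 Ht2)ᵀ =
      sep A1 A2 * (sep H1 H2 * (sep H1 H2)ᵀ) * (sep A1 A2)ᵀ) :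
    ∃ (R1 : Matrix (Fin p1) (Fin p1) ℝ) (R2 : Matrix (Fin p2) (Fin p2) ℝ),
      R1 * R1ᵀ = 1 ∧ R2 * R2ᵀ = 1 ∧
      (sep Ht1 Ht2)⁻¹ * (sep A1 A2 * S * (sep A1 A2)ᵀ) * ((sep Ht1 Ht2)⁻¹)ᵀ =
        sep R1 R2 * ((sep H1 H2)⁻¹ * S * ((sep H1 H2)⁻¹)ᵀ) * (sep R1 R2)ᵀ := by
  simp only [sep_eq_kronecker] at hcross ⊢
  have hG : (Ht1 ⊗ₖ Ht2)⁻¹ * (A1 ⊗ₖ A2) * (H1 ⊗ₖ H2) =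
      (Ht1⁻¹ * A1 * H1) ⊗ₖ (Ht2⁻¹ * A2 * H2) := by
    rw [inv_kronecker, mul_kronecker_mul, mul_kronecker_mul]
  have hGorth := inv_mul_mul_mul_transpose_eq_one (isUnit_det_kronecker hHt1 hHt2) hcross
  rw [hG] at hGorth
  obtain ⟨R1, R2, hR1, hR2, hR⟩ := exists_orthogonal_kronecker_eq hGorth
  refine ⟨R1, R2, hR1, hR2, ?_⟩
  rw [inv_mul_conj_eq_conj_inv_conj _ _ _ _ (isUnit_det_kronecker hH1 hH2), hG, hR]

theorem stmt13 (p1 p2 : ℕ) (hp1 : 0 < p1) (hp2 : 0 < p2)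
    (S : Matrix (Fin p1 × Fin p2) (Fin p1 × Fin p2) ℝ)
    (A1 : Matrix (Fin p1) (Fin p1) ℝ) (A2 : Matrix (Fin p2) (Fin p2) ℝ)
    (H1 : Matrix (Fin p1) (Fin p1) ℝ) (H2 : Matrix (Fin p2) (Fin p2) ℝ)
    (Ht1 : Matrix (Fin p1) (Fin p1) ℝ) (Ht2 : Matrix (Fin p2) (Fin p2) ℝ)
    (hA1 : IsUnit A1.det) (hA2 : IsUnit A2.det)
    (hH1 : IsUnit H1.det) (hH2 : IsUnit H2.det)
    (hHt1 : IsUnit Ht1.det) (hHt2 : IsUnit Ht2.det)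
    (hcross : sep Ht1 Ht2 * (sep Ht1 Ht2)ᵀ =
      sep A1 A2 * (sep H1 H2 * (sep H1 H2)ᵀ) * (sep A1 A2)ᵀ) :
    ∃ (R1 : Matrix (Fin p1) (Fin p1) ℝ) (R2 : Matrix (Fin p2) (Fin p2) ℝ),
      R1 * R1ᵀ = 1 ∧ R2 * R2ᵀ = 1 ∧
      (sep Ht1 Ht2)⁻¹ * (sep A1 A2 * S * (sep A1 A2)ᵀ) * ((sep Ht1 Ht2)⁻¹)ᵀ =
        sep R1 R2 * ((sep H1 H2)⁻¹ * S * ((sep H1 H2)⁻¹)ᵀ) * (sep R1 R2)ᵀ :=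
  stmt13_general p1 p2 S A1 A2 H1 H2 Ht1 Ht2 hH1 hH2 hHt1 hHt2 hcross
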